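/- For a compact convex planar set H with boundary arc-length parameterisation h, define X₊ = {(u, θ) : 0 ≤ θ < 2π, u > t̂(θ)} and the map p(u, θ) = h(t) + (u − t)(cos θ, sin θ) for t ∈ t(θ). Then p : X₊ → ℝ² \ H is a bijection. -/

import Mathlib

open scoped RealInnerProductSpace ENNReal
open Set Metric Real MeasureTheory Filter

noncomputable section

/-- The Euclidean plane. -/
abbrev E2 : Type := EuclideanSpace ℝ (Fin 2)

/-- The unit vector with angle `θ` to the positive x-axis. -/
def dir (θ : ℝ) : E2 := WithLp.toLp 2 ![Real.cos θ, Real.sin θ]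

/-- Anticlockwise rotation by a right angle. -/
def rot (v : E2) : E2 := WithLp.toLp 2 ![-(v 1), v 0]

/-- `h` is an arc-length parameterisation of the boundary of `H`, a closed
rectifiable curve of length `L`. -/
def IsArcLengthParam (h : ℝ → E2) (L : ℝ) (H : Set E2) : Prop :=
  h '' (Set.Icc 0 L) = frontier H ∧ Set.InjOn h (Set.Ico 0 L) ∧ h 0 = h L ∧
    ∀ s t : ℝ, 0 ≤ s → s ≤ t → t ≤ L →
      eVariationOn h (Set.Icc s t) = ENNReal.ofReal (t - s)

/-- The set-valued inverse of the tangential angle: the set of arc-length parameters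
at which the tangential angle set `[θm t, θp t]` contains `θ`. -/
def tset (θm θp : ℝ → ℝ) (L θ : ℝ) : Set ℝ :=
  {t | t ∈ Set.Ico 0 L ∧ θm t ≤ θ ∧ θ ≤ θp t}

/-!
Every `t ∈ t(θ)` gives a supporting line of `H` through `h t` with direction `θ`: for `t > 0`
the direction `θ` lies between the one-sided tangent angles `θm t ≤ θp t`, which are less than
`π` apart because `s ↦ ⟪rot (dir (θp t)), h s⟫` is minimal at `t` and `H` has interior. Conversely, a boundary point
`h r`, `0 < r < L`, on such a line with points of `H` on both sides of it along the line has
both one-sided tangent angles equal to `θ`, so `r ∈ t(θ)`.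

If a tangent ray met `H` beyond `t̂(θ)`, a whole segment of it would lie in `H` on the supporting
line, hence in `∂H`, but outside `h '' t(θ)`, so it would be the single point `h 0`. Two
tangent rays meeting at a point must be parallel, and equally oriented because `H` has interior,
so they coincide. For `x ∉ H`, separation gives a line in direction `θ₀` with `x` strictly on
its right; the intermediate value theorem for the support function yields a supporting line
through `x` with angle in `(θ₀ - π, θ₀)`, and that range puts `x` ahead of the tangent point.
-/

open scoped Topology

lemma inner_E2 (v w : E2) : ⟪v, w⟫ = v 0 * w 0 + v 1 * w 1 := by
  simp [PiLp.inner_apply, Fin.sum_univ_two, mul_comm]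

@[simp] lemma dir_apply_zero (a : ℝ) : dir a 0 = cos a := rfl
@[simp] lemma dir_apply_one (a : ℝ) : dir a 1 = sin a := rfl
@[simp] lemma rot_apply_zero (v : E2) : rot v 0 = -v 1 := rfl
@[simp] lemma rot_apply_one (v : E2) : rot v 1 = v 0 := rfl

lemma inner_rot_dir_dir (a b : ℝ) : ⟪rot (dir a), dir b⟫ = sin (b - a) := by
  simp [inner_E2, sin_sub]; ring

lemma inner_rot_self (v : E2) : ⟪rot v, v⟫ = 0 := by
  simp [inner_E2]; ring

lemma inner_rot_rot (v w : E2) : ⟪rot v, rot w⟫ = ⟪v, w⟫ := by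
  simp [inner_E2]; ring

lemma norm_rot (v : E2) : ‖rot v‖ = ‖v‖ := by
  rw [norm_eq_sqrt_real_inner, inner_rot_rot, ← norm_eq_sqrt_real_inner]

lemma rot_neg (v : E2) : rot (-v) = -rot v := by
  ext i; fin_cases i <;> simp [rot]

lemma norm_dir (a : ℝ) : ‖dir a‖ = 1 := by
  rw [norm_eq_sqrt_real_inner, inner_E2]; simp [← sq]

lemma dir_ne_zero (a : ℝ) : dir a ≠ 0 :=
  norm_ne_zero_iff.mp (by simp [norm_dir])

lemma dir_add_pi (a : ℝ) : dir (a + π) = -dir a := by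
  ext i; fin_cases i <;> simp [dir, cos_add_pi, sin_add_pi]

lemma dir_sub_pi (a : ℝ) : dir (a - π) = -dir a := by
  ext i; fin_cases i <;> simp [dir, cos_sub_pi, sin_sub_pi]

lemma dir_toIcoMod (a : ℝ) : dir (toIcoMod two_pi_pos 0 a) = dir a := by
  obtain ⟨n, hn⟩ : ∃ n : ℤ, toIcoMod two_pi_pos 0 a = a - n * (2 * π) :=
    ⟨toIcoDiv two_pi_pos 0 a, by rw [toIcoMod, zsmul_eq_mul]⟩
  ext i; fin_cases i <;> simp [dir, hn, cos_sub_int_mul_two_pi, sin_sub_int_mul_two_pi]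

lemma eq_smul_dir_of_inner_rot_eq_zero {a : ℝ} {y : E2} (hy : ⟪rot (dir a), y⟫ = 0) :
    y = ⟪dir a, y⟫ • dir a := by
  rw [inner_E2] at hy ⊢
  ext i; fin_cases i <;> simp at hy ⊢
  · linear_combination (-y 0) * sin_sq_add_cos_sq a - sin a * hy
  · linear_combination (-y 1) * sin_sq_add_cos_sq a + cos a * hy

lemma exists_pos_smul_rot_dir {w : E2} (hw : w ≠ 0) :
    ∃ r : ℝ, 0 < r ∧ ∃ a, w = r • rot (dir a) := by
  set z : ℂ := ⟨w 1, -w 0⟩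
  have hz : z ≠ 0 := by
    intro h0
    apply hw
    ext i; fin_cases i
    · simpa [z] using congrArg Complex.im h0
    · simpa [z] using congrArg Complex.re h0
  have hnz : ‖z‖ ≠ 0 := norm_ne_zero_iff.mpr hz
  have hre : z.re = w 1 := rfl
  have him : z.im = -w 0 := rfl
  refine ⟨‖z‖, norm_pos_iff.mpr hz, Complex.arg z, ?_⟩
  ext i; fin_cases i <;>
    simp [Complex.cos_arg hz, Complex.sin_arg, hre, him, mul_div_cancel₀ _ hnz]

lemma sin_eq_zero_cases {a : ℝ} (h : sin a = 0) (h1 : -(2 * π) < a) (h2 : a < 2 * π) :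
    a = -π ∨ a = 0 ∨ a = π := by
  obtain ⟨n, rfl⟩ := sin_eq_zero_iff.mp h
  have h1' : -2 < n := by exact_mod_cast (show (-2 : ℝ) < n by nlinarith [pi_pos])
  have h2' : n < 2 := by exact_mod_cast (show (n : ℝ) < 2 by nlinarith [pi_pos])
  interval_cases n <;> simp

lemma HasDerivWithinAt.nonneg_of_eventually_ge {F : ℝ → ℝ} {d r : ℝ}
    (hd : HasDerivWithinAt F d (Ici r) r) (hmin : ∀ᶠ s in 𝓝[>] r, F r ≤ F s) : 0 ≤ d := by
  have hd' := hasDerivWithinAt_iff_tendsto_slope.mp (hd.mono Ioi_subset_Ici_self)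
  rw [sdiff_singleton_eq_self self_notMem_Ioi] at hd'
  refine ge_of_tendsto hd' ?_
  filter_upwards [hmin, self_mem_nhdsWithin] with s hs hrs
  exact (slope_nonneg_iff_of_le (le_of_lt hrs)).mpr hs

lemma HasDerivWithinAt.nonpos_of_eventually_ge {F : ℝ → ℝ} {d r : ℝ}
    (hd : HasDerivWithinAt F d (Iic r) r) (hmin : ∀ᶠ s in 𝓝[<] r, F r ≤ F s) : d ≤ 0 := by
  have hd' := hasDerivWithinAt_iff_tendsto_slope.mp (hd.mono Iio_subset_Iic_self)
  rw [sdiff_singleton_eq_self self_notMem_Iio] at hd'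
  refine le_of_tendsto hd' ?_
  filter_upwards [hmin, self_mem_nhdsWithin] with s hs hsr
  rw [slope_comm]
  exact (slope_nonpos_iff_of_le (le_of_lt hsr)).mpr hs

lemma eventually_add_smul_mem_of_mem_interior {E : Type*} [NormedAddCommGroup E]
    [NormedSpace ℝ E] {H : Set E} {z : E} (hz : z ∈ interior H) (w : E) :
    ∀ᶠ δ in 𝓝 (0 : ℝ), z + δ • w ∈ H := by
  have : Tendsto (fun δ : ℝ ↦ z + δ • w) (𝓝 0) (𝓝 z) :=
    (by fun_prop : Continuous fun δ : ℝ ↦ z + δ • w).tendsto' 0 z (by simp)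
  exact this.eventually (mem_interior_iff_mem_nhds.mp hz)

def LiesLeftOf (H : Set E2) (a v : E2) : Prop := ∀ z ∈ H, 0 ≤ ⟪rot v, z - a⟫

namespace LiesLeftOf

variable {H : Set E2} {a v : E2}

lemma add_smul (hH : LiesLeftOf H a v) (c : ℝ) : LiesLeftOf H (a + c • v) v := by
  intro z hz
  simpa [sub_add_eq_sub_sub, inner_sub_right _ _ (c • v), real_inner_smul_right,
    inner_rot_self] using hH z hz

lemma inner_pos_of_mem_interior (hH : LiesLeftOf H a v) (hv : v ≠ 0) {z : E2}
    (hz : z ∈ interior H) : 0 < ⟪rot v, z - a⟫ := by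
  obtain ⟨δ, hδH, hδ⟩ := ((eventually_add_smul_mem_of_mem_interior hz (rot v)).filter_mono
    nhdsWithin_le_nhds |>.and (self_mem_nhdsWithin : ∀ᶠ δ in 𝓝[<] (0 : ℝ), δ < 0)).exists
  have := hH _ hδH
  rw [add_sub_right_comm, inner_add_right, real_inner_smul_right, real_inner_self_eq_norm_sq,
    norm_rot] at this
  linarith [mul_neg_of_neg_of_pos hδ (pow_pos (norm_pos_iff.mpr hv) 2)]

lemma eq_zero_of_neg (hint : (interior H).Nonempty) (h₁ : LiesLeftOf H a v)
    (h₂ : LiesLeftOf H a (-v)) : v = 0 := by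
  by_contra hv
  obtain ⟨z, hz⟩ := hint
  have h₁z := h₁.inner_pos_of_mem_interior hv hz
  have h₂z := h₂.inner_pos_of_mem_interior (neg_ne_zero.mpr hv) hz
  rw [rot_neg, inner_neg_left] at h₂z
  linarith

lemma mul_sin_nonneg {α β c : ℝ} (hH : LiesLeftOf H a (dir α)) (hc : a + c • dir β ∈ H) :
    0 ≤ c * sin (β - α) := by
  simpa [real_inner_smul_right, inner_rot_dir_dir] using hH _ hc

lemma eq_of_sin_sub_eq_zero (hint : (interior H).Nonempty) {α β : ℝ}
    (hα : α ∈ Ico 0 (2 * π)) (hβ : β ∈ Ico 0 (2 * π)) (h₁ : LiesLeftOf H a (dir α))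
    (h₂ : LiesLeftOf H a (dir β)) (hsin : sin (β - α) = 0) : α = β := by
  rcases sin_eq_zero_cases hsin (by linarith [hα.2, hβ.1]) (by linarith [hα.1, hβ.2])
    with h | h | h
  · rw [show β = α - π by linarith, dir_sub_pi] at h₂
    exact absurd (eq_zero_of_neg hint h₁ h₂) (dir_ne_zero α)
  · linarith
  · rw [show β = α + π by linarith, dir_add_pi] at h₂
    exact absurd (eq_zero_of_neg hint h₁ h₂) (dir_ne_zero α)

lemma of_le_of_le {α β θ : ℝ} (h₁ : LiesLeftOf H a (dir α)) (h₂ : LiesLeftOf H a (dir β))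
    (hαθ : α ≤ θ) (hθβ : θ ≤ β) (hβα : β - α < π) : LiesLeftOf H a (dir θ) := by
  rcases hαθ.eq_or_lt with rfl | hαθ
  · exact h₁
  intro z hz
  have key : sin (β - α) * ⟪rot (dir θ), z - a⟫ =
      sin (β - θ) * ⟪rot (dir α), z - a⟫ + sin (θ - α) * ⟪rot (dir β), z - a⟫ := by
    simp only [inner_E2, rot_apply_zero, rot_apply_one, dir_apply_zero, dir_apply_one, sin_sub]
    ring
  refine nonneg_of_mul_nonneg_right (key ▸ add_nonneg ?_ ?_)
    (sin_pos_of_pos_of_lt_pi (by linarith) hβα)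
  · exact mul_nonneg (sin_nonneg_of_nonneg_of_le_pi (by linarith) (by linarith)) (h₁ z hz)
  · exact mul_nonneg (sin_nonneg_of_nonneg_of_le_pi (by linarith) (by linarith)) (h₂ z hz)

lemma sin_sub_nonneg_of_hasDerivWithinAt {g : ℝ → E2} {r α β : ℝ}
    (hH : LiesLeftOf H (g r) (dir α)) (hg : ∀ᶠ s in 𝓝[>] r, g s ∈ H)
    (hd : HasDerivWithinAt g (dir β) (Ici r) r) : 0 ≤ sin (β - α) := by
  have hF : HasDerivWithinAt (fun s ↦ ⟪rot (dir α), g s⟫ - ⟪rot (dir α), g r⟫)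
      (sin (β - α)) (Ici r) r := by
    simpa [inner_rot_dir_dir] using
      ((hasDerivWithinAt_const r _ (rot (dir α))).inner ℝ hd).sub_const ⟪rot (dir α), g r⟫
  refine hF.nonneg_of_eventually_ge ?_
  filter_upwards [hg] with s hs
  simpa [← inner_sub_right] using hH _ hs

lemma sin_sub_nonpos_of_hasDerivWithinAt {g : ℝ → E2} {r α β : ℝ}
    (hH : LiesLeftOf H (g r) (dir α)) (hg : ∀ᶠ s in 𝓝[<] r, g s ∈ H)
    (hd : HasDerivWithinAt g (dir β) (Iic r) r) : sin (β - α) ≤ 0 := by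
  have hF : HasDerivWithinAt (fun s ↦ ⟪rot (dir α), g s⟫ - ⟪rot (dir α), g r⟫)
      (sin (β - α)) (Iic r) r := by
    simpa [inner_rot_dir_dir] using
      ((hasDerivWithinAt_const r _ (rot (dir α))).inner ℝ hd).sub_const ⟪rot (dir α), g r⟫
  refine hF.nonpos_of_eventually_ge ?_
  filter_upwards [hg] with s hs
  simpa [← inner_sub_right] using hH _ hs

end LiesLeftOf

lemma inner_rot_dir (a : ℝ) (z : E2) : ⟪rot (dir a), z⟫ = cos a * z 1 - sin a * z 0 := by
  simp [inner_E2]; ring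

lemma continuous_inner_rot_dir : Continuous fun q : ℝ × E2 ↦ ⟪rot (dir q.1), q.2⟫ := by
  simp only [inner_rot_dir]
  fun_prop

lemma exists_inner_rot_dir_lt_of_notMem {H : Set E2} (hconv : Convex ℝ H)
    (hclosed : IsClosed H) {x : E2} (hx : x ∉ H) :
    ∃ θ, ∀ z ∈ H, ⟪rot (dir θ), x⟫ < ⟪rot (dir θ), z⟫ := by
  obtain ⟨ℓ, s, hℓH, hℓx⟩ := geometric_hahn_banach_closed_point hconv hclosed hx
  obtain ⟨w, hw⟩ : ∃ w : E2, ∀ y, ⟪w, y⟫ = -ℓ y :=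
    ⟨-(InnerProductSpace.toDual ℝ E2).symm ℓ, fun y ↦ by simp [inner_neg_left]⟩
  by_cases hw0 : w = 0
  · refine ⟨0, fun z hz ↦ ?_⟩
    have h₁ := hw z
    have h₂ := hw x
    simp only [hw0, inner_zero_left] at h₁ h₂
    linarith [hℓH z hz]
  obtain ⟨r, hr, θ, rfl⟩ := exists_pos_smul_rot_dir hw0
  refine ⟨θ, fun z hz ↦ ?_⟩
  have h₁ := hw z
  have h₂ := hw x
  simp only [real_inner_smul_left] at h₁ h₂
  exact lt_of_mul_lt_mul_left (by linarith [hℓH z hz]) hr.le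

lemma exists_liesLeftOf_through {H : Set E2} (hcomp : IsCompact H) (hne : H.Nonempty)
    {x : E2} {θ₀ : ℝ} (hsep : ∀ z ∈ H, ⟪rot (dir θ₀), x⟫ < ⟪rot (dir θ₀), z⟫) :
    ∃ θ ∈ Ioo (θ₀ - π) θ₀, LiesLeftOf H x (dir θ) ∧ ∃ z ∈ H, ⟪rot (dir θ), z - x⟫ = 0 := by
  have hcont (φ : ℝ) : Continuous fun z : E2 ↦ ⟪rot (dir φ), z⟫ :=
    continuous_const.inner continuous_id
  set m : ℝ → ℝ := fun φ ↦ sInf ((fun z ↦ ⟪rot (dir φ), z⟫) '' H)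
  have hm_le (φ : ℝ) {z : E2} (hz : z ∈ H) : m φ ≤ ⟪rot (dir φ), z⟫ :=
    csInf_le ((hcomp.image (hcont φ)).bddBelow) (mem_image_of_mem _ hz)
  have hm_mem (φ : ℝ) : ∃ z ∈ H, ⟪rot (dir φ), z⟫ = m φ :=
    (hcomp.image (hcont φ)).sInf_mem (hne.image _)
  set f : ℝ → ℝ := fun φ ↦ m φ - ⟪rot (dir φ), x⟫
  have hf : Continuous f := by
    refine (hcomp.continuous_sInf continuous_inner_rot_dir).sub ?_
    simp only [inner_rot_dir]
    fun_prop
  have hf₀ : 0 < f θ₀ := by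
    obtain ⟨z, hz, hzm⟩ := hm_mem θ₀
    simp only [f, ← hzm]
    linarith [hsep z hz]
  have hfπ : f (θ₀ - π) < 0 := by
    obtain ⟨z, hz⟩ := hne
    have := hm_le (θ₀ - π) hz
    simp only [f, dir_sub_pi, rot_neg, inner_neg_left] at this ⊢
    linarith [hsep z hz]
  obtain ⟨θ, hθ, hfθ⟩ := intermediate_value_Ioo (by linarith [pi_pos]) hf.continuousOn
    ⟨hfπ, hf₀⟩
  refine ⟨θ, hθ, fun z hz ↦ ?_, ?_⟩
  · rw [inner_sub_right]
    linarith [hm_le θ hz, show f θ = 0 from hfθ]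
  · obtain ⟨z, hz, hzm⟩ := hm_mem θ
    refine ⟨z, hz, ?_⟩
    rw [inner_sub_right, hzm]
    exact sub_eq_zero.mpr (sub_eq_zero.mp hfθ)

lemma Convex.add_smul_mem_of_le {E : Type*} [AddCommGroup E] [Module ℝ E] {H : Set E}
    (hH : Convex ℝ H) {a v : E} {c d : ℝ}
    (ha : a ∈ H) (hd : a + d • v ∈ H) (hc : 0 ≤ c) (hcd : c ≤ d) : a + c • v ∈ H := by
  rcases hc.eq_or_lt with rfl | hc
  · simpa using ha
  have hd0 : 0 < d := hc.trans_le hcd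
  have := hH.add_smul_mem ha hd ⟨div_nonneg hc.le hd0.le, (div_le_one hd0).mpr hcd⟩
  rwa [smul_smul, div_mul_cancel₀ _ hd0.ne'] at this

lemma bddAbove_tset (θm θp : ℝ → ℝ) (L θ : ℝ) : BddAbove (tset θm θp L θ) :=
  ⟨L, fun _ hs ↦ hs.1.2.le⟩

/-- `θp t` and `θm t` are the angles of the right and left tangents of `h` at `t`.
The field `sub_eq_smul_dir` is what makes `p(u, θ)` independent of the choice of `t ∈ t(θ)`. -/
structure IsTangentAngles (H : Set E2) (L : ℝ) (h : ℝ → E2) (θm θp : ℝ → ℝ) : Prop where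
  mapsTo : MapsTo h (Icc 0 L) H
  hasDerivWithinAt_Ici : ∀ t ∈ Ico 0 L, HasDerivWithinAt h (dir (θp t)) (Ici t) t
  hasDerivWithinAt_Iic : ∀ t ∈ Ioc 0 L, HasDerivWithinAt h (dir (θm t)) (Iic t) t
  liesLeftOf_θp : ∀ t ∈ Ico 0 L, LiesLeftOf H (h t) (dir (θp t))
  liesLeftOf_θm : ∀ t ∈ Ioc 0 L, LiesLeftOf H (h t) (dir (θm t))
  θp_mem : ∀ t ∈ Ico 0 L, θp t ∈ Ico 0 (2 * π)
  θm_mem : ∀ t ∈ Ioc 0 L, θm t ∈ Ico 0 (2 * π)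
  θp_zero : θp 0 = 0
  sub_eq_smul_dir : ∀ θ, ∀ s ∈ tset θm θp L θ, ∀ t ∈ tset θm θp L θ,
    h s - h t = (s - t) • dir θ

namespace IsTangentAngles

variable {H : Set E2} {L : ℝ} {h : ℝ → E2} {θm θp : ℝ → ℝ}

lemma eventually_mem_nhdsGT (hT : IsTangentAngles H L h θm θp) {r : ℝ} (hr : r ∈ Ico 0 L) :
    ∀ᶠ s in 𝓝[>] r, h s ∈ H :=
  Filter.mem_of_superset (Ioo_mem_nhdsGT hr.2) fun _ hs ↦ hT.mapsTo ⟨hr.1.trans hs.1.le, hs.2.le⟩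

lemma eventually_mem_nhdsLT (hT : IsTangentAngles H L h θm θp) {r : ℝ} (hr : r ∈ Ioc 0 L) :
    ∀ᶠ s in 𝓝[<] r, h s ∈ H :=
  Filter.mem_of_superset (Ioo_mem_nhdsLT hr.1) fun _ hs ↦ hT.mapsTo ⟨hs.1.le, hs.2.le.trans hr.2⟩

lemma mem_of_mem_tset (hT : IsTangentAngles H L h θm θp) {θ t : ℝ}
    (ht : t ∈ tset θm θp L θ) : h t ∈ H :=
  hT.mapsTo ⟨ht.1.1, ht.1.2.le⟩

lemma θp_sub_θm_lt_pi (hT : IsTangentAngles H L h θm θp) (hint : (interior H).Nonempty)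
    {t : ℝ} (ht : t ∈ Ioo 0 L) : θp t - θm t < π := by
  have htp : t ∈ Ico 0 L := ⟨ht.1.le, ht.2⟩
  have htm : t ∈ Ioc 0 L := ⟨ht.1, ht.2.le⟩
  have hsin : 0 ≤ sin (θp t - θm t) := by
    have := (hT.liesLeftOf_θp t htp).sin_sub_nonpos_of_hasDerivWithinAt
      (hT.eventually_mem_nhdsLT htm) (hT.hasDerivWithinAt_Iic t htm)
    rwa [← neg_sub, sin_neg, neg_nonpos] at this
  rcases hsin.eq_or_lt with hsin | hsin
  · have := (hT.liesLeftOf_θm t htm).eq_of_sin_sub_eq_zero hint (hT.θm_mem t htm)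
      (hT.θp_mem t htp) (hT.liesLeftOf_θp t htp) hsin.symm
    linarith [pi_pos]
  by_contra! hπ
  have : sin (θp t - θm t - 2 * π) ≤ 0 := sin_nonpos_of_nonpos_of_neg_pi_le
    (by linarith [(hT.θp_mem t htp).2, (hT.θm_mem t htm).1]) (by linarith)
  rw [sin_sub_two_pi] at this
  linarith

theorem liesLeftOf_of_mem_tset (hT : IsTangentAngles H L h θm θp)
    (hint : (interior H).Nonempty) {θ t : ℝ} (hθ : 0 ≤ θ) (ht : t ∈ tset θm θp L θ) :
    LiesLeftOf H (h t) (dir θ) := by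
  obtain ⟨⟨ht0, htL⟩, hθm, hθp⟩ := ht
  rcases ht0.eq_or_lt with rfl | ht0
  · rw [show θ = θp 0 by linarith [hT.θp_zero]]
    exact hT.liesLeftOf_θp 0 ⟨le_rfl, htL⟩
  exact (hT.liesLeftOf_θm t ⟨ht0, htL.le⟩).of_le_of_le (hT.liesLeftOf_θp t ⟨ht0.le, htL⟩)
    hθm hθp (hT.θp_sub_θm_lt_pi hint ⟨ht0, htL⟩)

theorem mem_tset_of_liesLeftOf (hT : IsTangentAngles H L h θm θp)
    (hint : (interior H).Nonempty) {θ r c e : ℝ} (hθ : θ ∈ Ico 0 (2 * π)) (hr : r ∈ Ioo 0 L)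
    (hH : LiesLeftOf H (h r) (dir θ)) (hc : 0 < c) (hback : h r + (-c) • dir θ ∈ H)
    (he : 0 < e) (hfwd : h r + e • dir θ ∈ H) : r ∈ tset θm θp L θ := by
  have hrp : r ∈ Ico 0 L := ⟨hr.1.le, hr.2⟩
  have hrm : r ∈ Ioc 0 L := ⟨hr.1, hr.2.le⟩
  have hθp : θ = θp r := by
    refine hH.eq_of_sin_sub_eq_zero hint hθ (hT.θp_mem r hrp) (hT.liesLeftOf_θp r hrp) ?_
    have hfwd' := nonneg_of_mul_nonneg_right ((hT.liesLeftOf_θp r hrp).mul_sin_nonneg hfwd) he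
    rw [← neg_sub, sin_neg, neg_nonneg] at hfwd'
    exact le_antisymm hfwd' (hH.sin_sub_nonneg_of_hasDerivWithinAt
      (hT.eventually_mem_nhdsGT hrp) (hT.hasDerivWithinAt_Ici r hrp))
  have hθm : θ = θm r := by
    refine hH.eq_of_sin_sub_eq_zero hint hθ (hT.θm_mem r hrm) (hT.liesLeftOf_θm r hrm) ?_
    have hback' := (hT.liesLeftOf_θm r hrm).mul_sin_nonneg hback
    rw [← neg_sub, sin_neg, neg_mul_neg] at hback'
    exact le_antisymm (hH.sin_sub_nonpos_of_hasDerivWithinAt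
      (hT.eventually_mem_nhdsLT hrm) (hT.hasDerivWithinAt_Iic r hrm))
      (nonneg_of_mul_nonneg_right hback' hc)
  exact ⟨hrp, hθm.ge, hθp.le⟩

theorem add_smul_dir_eq_apply_zero (hT : IsTangentAngles H L h θm θp)
    (hint : (interior H).Nonempty) (hconv : Convex ℝ H) (hfr : frontier H ⊆ h '' Icc 0 L)
    (hL : h L = h 0) {θ t c u : ℝ} (hθ : θ ∈ Ico 0 (2 * π)) (ht : t ∈ tset θm θp L θ)
    (hc : sSup (tset θm θp L θ) - t < c) (hcu : c < u - t) (hu : h t + (u - t) • dir θ ∈ H) :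
    h t + c • dir θ = h 0 := by
  have hleft := hT.liesLeftOf_of_mem_tset hint hθ.1 ht
  have hc0 : 0 < c := by linarith [le_csSup (bddAbove_tset θm θp L θ) ht]
  have hmem : h t + c • dir θ ∈ H :=
    hconv.add_smul_mem_of_le (hT.mem_of_mem_tset ht) hu hc0.le hcu.le
  have hnint : h t + c • dir θ ∉ interior H := fun hint' ↦
    (hleft.inner_pos_of_mem_interior (dir_ne_zero θ) hint').ne'
      (by simp [real_inner_smul_right, inner_rot_self])
  obtain ⟨r, hr, hrc⟩ := hfr ⟨subset_closure hmem, hnint⟩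
  rcases hr.1.eq_or_lt with rfl | hr0
  · exact hrc.symm
  rcases hr.2.eq_or_lt with rfl | hrL
  · rw [← hL, hrc]
  have hrt : r ∈ tset θm θp L θ := by
    refine hT.mem_tset_of_liesLeftOf hint hθ ⟨hr0, hrL⟩ (hrc ▸ hleft.add_smul c) hc0 ?_
      (e := u - t - c) (by linarith) ?_
    · simpa [hrc] using hT.mem_of_mem_tset ht
    · rw [hrc, add_assoc, ← add_smul]; convert hu using 3; ring
  have hcr : c • dir θ = (r - t) • dir θ := by
    rw [← hT.sub_eq_smul_dir θ r hrt t ht, hrc, add_sub_cancel_left]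
  have := smul_left_injective ℝ (dir_ne_zero θ) hcr
  linarith [le_csSup (bddAbove_tset θm θp L θ) hrt]

theorem add_smul_dir_notMem (hT : IsTangentAngles H L h θm θp)
    (hint : (interior H).Nonempty) (hconv : Convex ℝ H) (hfr : frontier H ⊆ h '' Icc 0 L)
    (hL : h L = h 0) {θ t u : ℝ} (hθ : θ ∈ Ico 0 (2 * π)) (ht : t ∈ tset θm θp L θ)
    (hu : sSup (tset θm θp L θ) < u) : h t + (u - t) • dir θ ∉ H := by
  intro hmem
  set S := sSup (tset θm θp L θ)
  have h₁ := hT.add_smul_dir_eq_apply_zero hint hconv hfr hL hθ ht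
    (c := S - t + (u - S) / 3) (by linarith) (by linarith) hmem
  have h₂ := hT.add_smul_dir_eq_apply_zero hint hconv hfr hL hθ ht
    (c := S - t + 2 * (u - S) / 3) (by linarith) (by linarith) hmem
  have := smul_left_injective ℝ (dir_ne_zero θ) (add_left_cancel (h₁.trans h₂.symm))
  linarith

theorem eq_of_add_smul_dir_eq (hT : IsTangentAngles H L h θm θp)
    (hint : (interior H).Nonempty) {θ θ' t t' u u' : ℝ} (hθ : θ ∈ Ico 0 (2 * π))
    (hθ' : θ' ∈ Ico 0 (2 * π)) (ht : t ∈ tset θm θp L θ) (ht' : t' ∈ tset θm θp L θ')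
    (hu : t < u) (hu' : t' < u') (heq : h t + (u - t) • dir θ = h t' + (u' - t') • dir θ') :
    u = u' ∧ θ = θ' := by
  have h₁ := (hT.liesLeftOf_of_mem_tset hint hθ.1 ht).add_smul (u - t)
  have h₂ := (hT.liesLeftOf_of_mem_tset hint hθ'.1 ht').add_smul (u' - t')
  rw [← heq] at h₂
  have s₁ := h₁.mul_sin_nonneg (c := -(u' - t')) (β := θ')
    (by simpa only [heq, neg_smul, add_neg_cancel_right] using hT.mem_of_mem_tset ht')
  have s₂ := h₂.mul_sin_nonneg (c := -(u - t)) (β := θ)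
    (by simpa only [neg_smul, add_neg_cancel_right] using hT.mem_of_mem_tset ht)
  rw [← neg_sub θ', sin_neg] at s₂
  have hsin : sin (θ' - θ) = 0 := by nlinarith
  obtain rfl := h₁.eq_of_sin_sub_eq_zero hint hθ hθ' h₂ hsin
  refine ⟨?_, rfl⟩
  have hdiff : (t' - t) • dir θ = (u - t - (u' - t')) • dir θ := by
    rw [← hT.sub_eq_smul_dir θ t' ht' t ht]
    linear_combination (norm := module) -heq
  linarith [smul_left_injective ℝ (dir_ne_zero θ) hdiff]

lemma add_smul_dir_mem_of_le_sSup (hT : IsTangentAngles H L h θm θp) (hconv : Convex ℝ H)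
    (hclosed : IsClosed H) {θ t c : ℝ} (ht : t ∈ tset θm θp L θ) (hc : 0 ≤ c)
    (hcS : c ≤ sSup (tset θm θp L θ) - t) : h t + c • dir θ ∈ H := by
  have hray : MapsTo (fun s ↦ h t + (s - t) • dir θ) (tset θm θp L θ) H := fun s hs ↦ by
    simpa [← hT.sub_eq_smul_dir θ s hs t ht] using hT.mem_of_mem_tset hs
  have hS := map_mem_closure (by fun_prop) (csSup_mem_closure ⟨t, ht⟩ (bddAbove_tset θm θp L θ))
    hray
  rw [hclosed.closure_eq] at hS
  exact hconv.add_smul_mem_of_le (hT.mem_of_mem_tset ht) hS hc hcS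

theorem exists_add_smul_dir_eq (hT : IsTangentAngles H L h θm θp)
    (hint : (interior H).Nonempty) (hconv : Convex ℝ H) (hcomp : IsCompact H)
    (hne : ∀ θ ∈ Ico 0 (2 * π), (tset θm θp L θ).Nonempty) {x : E2} (hx : x ∉ H) :
    ∃ θ ∈ Ico 0 (2 * π), ∃ t ∈ tset θm θp L θ, ∃ u,
      sSup (tset θm θp L θ) < u ∧ h t + (u - t) • dir θ = x := by
  obtain ⟨θ₀, hsep⟩ := exists_inner_rot_dir_lt_of_notMem hconv hcomp.isClosed hx
  obtain ⟨φ, hφ, hxφ, z, hz, hzφ⟩ :=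
    exists_liesLeftOf_through hcomp (hint.mono interior_subset) hsep
  set θ := toIcoMod two_pi_pos 0 φ
  have hθ : θ ∈ Ico 0 (2 * π) := by simpa using toIcoMod_mem_Ico two_pi_pos 0 φ
  obtain ⟨t, ht⟩ := hne θ hθ
  have htH : h t ∈ H := hT.mem_of_mem_tset ht
  have hleft : LiesLeftOf H (h t) (dir φ) := by
    simpa [θ, dir_toIcoMod] using hT.liesLeftOf_of_mem_tset hint hθ.1 ht
  have hon : ⟪rot (dir φ), x - h t⟫ = 0 := by
    have h₁ := hxφ _ htH
    have h₂ := hleft z hz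
    rw [inner_sub_right] at h₁ h₂ hzφ ⊢
    linarith
  set c := ⟪dir φ, x - h t⟫
  have hx_eq : x = h t + c • dir θ := by
    rw [dir_toIcoMod, ← eq_smul_dir_of_inner_rot_eq_zero hon, add_sub_cancel]
  have hc : 0 < c := by
    have := hsep _ htH
    rw [hx_eq, dir_toIcoMod, inner_add_right, real_inner_smul_right, inner_rot_dir_dir,
      ← neg_sub, sin_neg] at this
    have hsin := sin_pos_of_pos_of_lt_pi (x := θ₀ - φ) (by linarith [hφ.2]) (by linarith [hφ.1])
    nlinarith
  refine ⟨θ, hθ, t, ht, t + c, ?_, by rw [add_sub_cancel_left, ← hx_eq]⟩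
  by_contra! hS
  exact hx (hx_eq ▸ hT.add_smul_dir_mem_of_le_sSup hconv hcomp.isClosed ht hc.le (by linarith))

end IsTangentAngles

theorem tangent_ray_map_bijective_general (H : Set E2)
    (hconv : Convex ℝ H) (hcomp : IsCompact H) (hint : (interior H).Nonempty)
    (L : ℝ) (h : ℝ → E2) (hparam : IsArcLengthParam h L H)
    (dp dm : ℝ → E2)
    (hdp : ∀ t ∈ Set.Ico 0 L, HasDerivWithinAt h (dp t) (Set.Ici t) t)
    (hdm : ∀ t ∈ Set.Ioc 0 L, HasDerivWithinAt h (dm t) (Set.Iic t) t)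
    (hleftp : ∀ t ∈ Set.Ico 0 L, ∀ x ∈ H, 0 ≤ ⟪rot (dp t), x - h t⟫)
    (hleftm : ∀ t ∈ Set.Ioc 0 L, ∀ x ∈ H, 0 ≤ ⟪rot (dm t), x - h t⟫)
    (θp θm : ℝ → ℝ)
    (hθp : ∀ t ∈ Set.Ico 0 L, θp t ∈ Set.Ico 0 (2 * π) ∧ dp t = dir (θp t))
    (hθm : ∀ t ∈ Set.Ioc 0 L, θm t ∈ Set.Ico 0 (2 * π) ∧ dm t = dir (θm t))
    (hstart : θp 0 = 0)
    (p : ℝ → ℝ → E2)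
    (hne : ∀ θ ∈ Set.Ico 0 (2 * π), (tset θm θp L θ).Nonempty)
    (hp : ∀ u θ : ℝ, ∀ t ∈ tset θm θp L θ, p u θ = h t + (u - t) • dir θ) :
    Set.BijOn (fun x : ℝ × ℝ => p x.1 x.2)
      {x : ℝ × ℝ | x.2 ∈ Set.Ico 0 (2 * π) ∧ sSup (tset θm θp L x.2) < x.1} Hᶜ := by
  have hT : IsTangentAngles H L h θm θp :=
    { mapsTo := fun s hs ↦ hcomp.isClosed.frontier_subset (hparam.1 ▸ mem_image_of_mem h hs)
      hasDerivWithinAt_Ici := fun t ht ↦ (hθp t ht).2 ▸ hdp t ht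
      hasDerivWithinAt_Iic := fun t ht ↦ (hθm t ht).2 ▸ hdm t ht
      liesLeftOf_θp := fun t ht ↦ (hθp t ht).2 ▸ hleftp t ht
      liesLeftOf_θm := fun t ht ↦ (hθm t ht).2 ▸ hleftm t ht
      θp_mem := fun t ht ↦ (hθp t ht).1
      θm_mem := fun t ht ↦ (hθm t ht).1
      θp_zero := hstart
      sub_eq_smul_dir := fun θ s hs t ht ↦ by
        linear_combination (norm := module) (hp 0 θ s hs).symm.trans (hp 0 θ t ht) }
  refine ⟨?_, ?_, ?_⟩
  · rintro ⟨u, θ⟩ ⟨hθ, hu⟩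
    obtain ⟨t, ht⟩ := hne θ hθ
    show p u θ ∉ H
    rw [hp u θ t ht]
    exact hT.add_smul_dir_notMem hint hconv hparam.1.ge hparam.2.2.1.symm hθ ht hu
  · rintro ⟨u, θ⟩ ⟨hθ, hu⟩ ⟨u', θ'⟩ ⟨hθ', hu'⟩ heq
    obtain ⟨t, ht⟩ := hne θ hθ
    obtain ⟨t', ht'⟩ := hne θ' hθ'
    obtain ⟨rfl, rfl⟩ := hT.eq_of_add_smul_dir_eq hint hθ hθ' ht ht'
      ((le_csSup (bddAbove_tset θm θp L θ) ht).trans_lt hu)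
      ((le_csSup (bddAbove_tset θm θp L θ') ht').trans_lt hu')
      (by simpa only [hp _ _ _ ht, hp _ _ _ ht'] using heq)
    rfl
  · intro x hx
    obtain ⟨θ, hθ, t, ht, u, hu, rfl⟩ := hT.exists_add_smul_dir_eq hint hconv hcomp hne hx
    exact ⟨(u, θ), ⟨hθ, hu⟩, hp u θ t ht⟩

/-- The tangent-ray map `p(u, θ)` restricted to
`X₊ = {(u, θ) : 0 ≤ θ < 2π, u > t̂(θ)}` is a bijection onto `ℝ² \ H`. -/
theorem tangent_ray_map_bijective (H : Set E2)
    (hconv : Convex ℝ H) (hcomp : IsCompact H) (hint : (interior H).Nonempty)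
    (L : ℝ) (hL : 0 < L) (h : ℝ → E2) (hparam : IsArcLengthParam h L H)
    (dp dm : ℝ → E2)
    (hdp : ∀ t ∈ Set.Ico 0 L, HasDerivWithinAt h (dp t) (Set.Ici t) t)
    (hdm : ∀ t ∈ Set.Ioc 0 L, HasDerivWithinAt h (dm t) (Set.Iic t) t)
    (hleftp : ∀ t ∈ Set.Ico 0 L, ∀ x ∈ H, 0 ≤ ⟪rot (dp t), x - h t⟫)
    (hleftm : ∀ t ∈ Set.Ioc 0 L, ∀ x ∈ H, 0 ≤ ⟪rot (dm t), x - h t⟫)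
    (θp θm : ℝ → ℝ)
    (hθp : ∀ t ∈ Set.Ico 0 L, θp t ∈ Set.Ico 0 (2 * π) ∧ dp t = dir (θp t))
    (hθm : ∀ t ∈ Set.Ioc 0 L, θm t ∈ Set.Ico 0 (2 * π) ∧ dm t = dir (θm t))
    (hdiff0 : DifferentiableAt ℝ h 0) (hstart : θp 0 = 0)
    (p : ℝ → ℝ → E2)
    (hne : ∀ θ ∈ Set.Ico 0 (2 * π), (tset θm θp L θ).Nonempty)
    (hp : ∀ u θ : ℝ, ∀ t ∈ tset θm θp L θ, p u θ = h t + (u - t) • dir θ) :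
    Set.BijOn (fun x : ℝ × ℝ => p x.1 x.2)
      {x : ℝ × ℝ | x.2 ∈ Set.Ico 0 (2 * π) ∧ sSup (tset θm θp L x.2) < x.1} Hᶜ :=
  tangent_ray_map_bijective_general H hconv hcomp hint L h hparam dp dm hdp hdm hleftp hleftm θp θm
    hθp hθm hstart p hne hp

end
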